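/- Let T > 0, γ > 0, r > 0, p₂ < 1 with p₂ ≠ 0, λ > 0 and V̄ > 0. Let W_T be a Gaussian random variable with mean 0 and variance T and set Z := exp(−(r + γ²/2)T − γ W_T). Then the budget identity for the optimal constrained terminal wealth max(V̄, (λZ)^(1/(p₂−1))) holds: E[Z · max(V̄, (λZ)^(1/(p₂−1)))] = λ^(1/(p₂−1)) · ξ(T, 0, 1, p₂/(p₂−1), 0, V̄^(p₂−1)/λ) + V̄ · ξ(T, 0, 1, 1, V̄^(p₂−1)/λ, +∞). -/

import Mathlib

open MeasureTheory ProbabilityTheory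

open scoped ENNReal

/-- Cumulative distribution function of the standard normal distribution. -/
noncomputable def Phi (x : ℝ) : ℝ := ((gaussianReal 0 1) (Set.Iic x)).toReal

/-- `Φ(d̄(x) + kγ√(s − t))`, where `d̄(x) = (ln(z/x) − (r + γ²/2)(s − t)) / (γ √(s − t))`
for `x ∈ (0, ∞)`, with the conventions `Φ(d̄(0) + u) = 1` and `Φ(d̄(∞) + u) = 0`. -/
noncomputable def PhiDbar (γ r s t z k : ℝ) (x : ℝ≥0∞) : ℝ :=
  if x = 0 then 1
  else if x = ⊤ then 0
  else Phi ((Real.log (z / x.toReal) - (r + γ ^ 2 / 2) * (s - t)) / (γ * Real.sqrt (s - t))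
      + k * γ * Real.sqrt (s - t))

/-- `ξ(s, t, z, k, a, b; γ, r)`. -/
noncomputable def xi (γ r s t z k : ℝ) (a b : ℝ≥0∞) : ℝ :=
  z ^ k * Real.exp (-k * (r + γ ^ 2 / 2) * (s - t) + k ^ 2 * γ ^ 2 / 2 * (s - t)) *
    (PhiDbar γ r s t z k a - PhiDbar γ r s t z k b) * (if a < b then 1 else 0)

/-- `h(t₁, t₂) = exp((μ_F − σ_F²/2 − σ_F r/γ − σ_F γ/2)(t₂ − t₁))`. -/
noncomputable def hF (γ r μF σF t₁ t₂ : ℝ) : ℝ :=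
  Real.exp ((μF - σF ^ 2 / 2 - σF * r / γ - σF * γ / 2) * (t₂ - t₁))

/-!
Write `Z = exp(-(r + γ²/2) T - γ W_T)` and `β = 1/(p₂ - 1) < 0`. Since `x ↦ x ^ β` is
decreasing, the maximum is `(λZ)^β` exactly on `{Z ≤ V̄^(p₂-1)/λ}`, so the integrand is
`λ^β Z^(p₂/(p₂-1))` there and `V̄ Z` elsewhere. Both events are half-lines in `W_T`, and each
truncated moment `E[Z^k; W_T ∈ half-line]` is computed by exponential tilting:
`e^{cw}` times the `N(0, T)` density is `e^{c²T/2}` times the `N(cT, T)` density, which turns the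
truncated moment into a Gaussian tail probability, i.e. a value of `Φ`.
-/

open Real Set

open scoped NNReal

section GaussianTilt

variable {v : ℝ≥0}

lemma gaussianReal_real_Iic_eq_Phi (hv : v ≠ 0) (m a : ℝ) :
    (gaussianReal m v).real (Iic a) = Phi ((a - m) / √v) := by
  have hs : 0 < √(v : ℝ) := Real.sqrt_pos.mpr (by positivity)
  have hmap : (gaussianReal 0 1).map (fun x ↦ √v * x + m) = gaussianReal m v := by
    rw [show (fun x ↦ √v * x + m) = (· + m) ∘ (√v * ·) from rfl,
      ← Measure.map_map (by fun_prop) (by fun_prop), gaussianReal_map_const_mul,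
      gaussianReal_map_add_const]
    congr 1
    · simp
    · ext; simp [Real.sq_sqrt v.coe_nonneg]
  have hpre : (fun x ↦ √v * x + m) ⁻¹' Iic a = Iic ((a - m) / √v) := by
    ext x
    simp only [mem_preimage, mem_Iic, le_div_iff₀ hs]
    constructor <;> intro h <;> linarith
  rw [← hmap, measureReal_def, Measure.map_apply (by fun_prop) measurableSet_Iic, hpre, Phi]

lemma gaussianReal_real_Iio_eq_Phi (hv : v ≠ 0) (m a : ℝ) :
    (gaussianReal m v).real (Iio a) = Phi ((a - m) / √v) := by
  have := nullSingletonClass_gaussianReal (μ := m) hv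
  rw [measureReal_congr Iio_ae_eq_Iic, gaussianReal_real_Iic_eq_Phi hv]

lemma gaussianReal_real_Ici_eq_one_sub_Phi (hv : v ≠ 0) (m a : ℝ) :
    (gaussianReal m v).real (Ici a) = 1 - Phi ((a - m) / √v) := by
  rw [← compl_Iio, probReal_compl_eq_one_sub measurableSet_Iio, gaussianReal_real_Iio_eq_Phi hv]

lemma exp_mul_mul_gaussianPDFReal (m c x : ℝ) :
    exp (c * x) * gaussianPDFReal m v x
      = exp (c * m + c ^ 2 * v / 2) * gaussianPDFReal (m + c * v) v x := by
  rcases eq_or_ne v 0 with rfl | hv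
  · simp [gaussianPDFReal]
  simp only [gaussianPDFReal, mul_left_comm (exp _), ← exp_add]
  congr 2
  field_simp
  ring

lemma setIntegral_exp_mul_gaussianReal (hv : v ≠ 0) (m c : ℝ) {s : Set ℝ} (hs : MeasurableSet s) :
    ∫ x in s, exp (c * x) ∂gaussianReal m v
      = exp (c * m + c ^ 2 * v / 2) * (gaussianReal (m + c * v) v).real s := by
  rw [gaussianReal_of_var_ne_zero _ hv,
    setIntegral_withDensity_eq_setIntegral_toReal_smul (measurable_gaussianPDF _ _)
      (ae_of_all _ fun _ ↦ gaussianPDF_lt_top) _ hs]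
  simp only [gaussianPDF, ENNReal.toReal_ofReal (gaussianPDFReal_nonneg _ _ _), smul_eq_mul,
    mul_comm (gaussianPDFReal _ _ _), exp_mul_mul_gaussianPDFReal]
  rw [integral_const_mul, measureReal_def, gaussianReal_apply_eq_integral _ hv,
    ENNReal.toReal_ofReal (setIntegral_nonneg hs fun _ _ ↦ gaussianPDFReal_nonneg _ _ _)]

end GaussianTilt

section PricingKernel

variable {γ r T c : ℝ}

noncomputable def pricingKernel (γ r T w : ℝ) : ℝ := exp (-(r + γ ^ 2 / 2) * T - γ * w)

lemma pricingKernel_pos (w : ℝ) : 0 < pricingKernel γ r T w := exp_pos _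

lemma continuous_pricingKernel : Continuous (pricingKernel γ r T) := by
  unfold pricingKernel
  fun_prop

lemma pricingKernel_rpow (k w : ℝ) :
    pricingKernel γ r T w ^ k = exp (-k * (r + γ ^ 2 / 2) * T) * exp (-k * γ * w) := by
  rw [pricingKernel, ← exp_mul, ← exp_add]
  ring_nf

lemma integrable_pricingKernel_rpow (k m : ℝ) (v : ℝ≥0) :
    Integrable (fun w ↦ pricingKernel γ r T w ^ k) (gaussianReal m v) := by
  simp_rw [pricingKernel_rpow]
  exact (integrable_exp_mul_gaussianReal _).const_mul _

lemma setOf_pricingKernel_le (hγ : 0 < γ) (hc : 0 < c) :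
    {w | pricingKernel γ r T w ≤ c} = Ici ((-log c - (r + γ ^ 2 / 2) * T) / γ) := by
  ext w
  rw [mem_ofPred_eq, mem_Ici, pricingKernel, ← le_log_iff_exp_le hc, div_le_iff₀ hγ]
  constructor <;> intro h <;> linarith

lemma setOf_lt_pricingKernel (hγ : 0 < γ) (hc : 0 < c) :
    {w | c < pricingKernel γ r T w} = Iio ((-log c - (r + γ ^ 2 / 2) * T) / γ) := by
  rw [← compl_Ici, ← setOf_pricingKernel_le hγ hc, compl_ofPred]
  simp only [not_le]

lemma PhiDbar_ofReal (hT : 0 < T) (hγ : 0 < γ) (hc : 0 < c) (k : ℝ) :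
    PhiDbar γ r T 0 1 k (ENNReal.ofReal c)
      = Phi (((-log c - (r + γ ^ 2 / 2) * T) / γ + k * γ * T) / √T) := by
  rw [PhiDbar, if_neg (by simpa using hc), if_neg ENNReal.ofReal_ne_top,
    ENNReal.toReal_ofReal hc.le, one_div, log_inv, sub_zero]
  congr 1
  field_simp
  rw [Real.sq_sqrt hT.le]

lemma setIntegral_pricingKernel_rpow_le (hT : 0 < T) (hγ : 0 < γ) (hc : 0 < c) (k : ℝ) :
    ∫ w in {w | pricingKernel γ r T w ≤ c}, pricingKernel γ r T w ^ k ∂gaussianReal 0 T.toNNReal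
      = xi γ r T 0 1 k 0 (ENNReal.ofReal c) := by
  have hv : T.toNNReal ≠ 0 := by simpa using hT
  simp_rw [setOf_pricingKernel_le hγ hc, pricingKernel_rpow]
  rw [integral_const_mul, setIntegral_exp_mul_gaussianReal hv _ _ measurableSet_Ici,
    gaussianReal_real_Ici_eq_one_sub_Phi hv, xi, PhiDbar_ofReal hT hγ hc,
    if_pos (ENNReal.ofReal_pos.mpr hc), PhiDbar, if_pos rfl, Real.coe_toNNReal _ hT.le]
  simp only [one_rpow, ← mul_assoc, ← exp_add]
  ring_nf

lemma setIntegral_pricingKernel_rpow_gt (hT : 0 < T) (hγ : 0 < γ) (hc : 0 < c) (k : ℝ) :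
    ∫ w in {w | c < pricingKernel γ r T w}, pricingKernel γ r T w ^ k ∂gaussianReal 0 T.toNNReal
      = xi γ r T 0 1 k (ENNReal.ofReal c) ⊤ := by
  have hv : T.toNNReal ≠ 0 := by simpa using hT
  simp_rw [setOf_lt_pricingKernel hγ hc, pricingKernel_rpow]
  rw [integral_const_mul, setIntegral_exp_mul_gaussianReal hv _ _ measurableSet_Iio,
    gaussianReal_real_Iio_eq_Phi hv, xi, PhiDbar_ofReal hT hγ hc,
    if_pos ENNReal.ofReal_lt_top, PhiDbar, if_neg ENNReal.top_ne_zero, if_pos rfl,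
    Real.coe_toNNReal _ hT.le]
  simp only [one_rpow, ← mul_assoc, ← exp_add]
  ring_nf

end PricingKernel

lemma mul_max_rpow_eq_ite {lam V p Z : ℝ} (hlam : 0 < lam) (hV : 0 < V) (hp : p < 1)
    (hZ : 0 < Z) :
    Z * max V ((lam * Z) ^ (1 / (p - 1))) =
      if Z ≤ V ^ (p - 1) / lam then lam ^ (1 / (p - 1)) * Z ^ (p / (p - 1)) else V * Z := by
  have hp1 : p - 1 < 0 := by linarith
  have hcrit : V ≤ (lam * Z) ^ (1 / (p - 1)) ↔ Z ≤ V ^ (p - 1) / lam := by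
    rw [one_div, le_rpow_inv_iff_of_neg hV (by positivity) hp1, le_div_iff₀' hlam]
  split_ifs with h
  · have hk : p / (p - 1) = 1 + 1 / (p - 1) := by field_simp [hp1.ne]; ring
    rw [max_eq_right (hcrit.mpr h), mul_rpow hlam.le hZ.le, mul_left_comm, hk,
      rpow_add hZ, rpow_one]
  · rw [max_eq_left (le_of_not_ge (mt hcrit.mp h)), mul_comm]

theorem budget_identity_optimal_constrained_terminal_wealth_general
    (T γ r p₂ lam V : ℝ)
    (hT : 0 < T) (hγ : 0 < γ) (hp : p₂ < 1)
    (hlam : 0 < lam) (hV : 0 < V) :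
    (∫ w, Real.exp (-(r + γ ^ 2 / 2) * T - γ * w) *
        max V ((lam * Real.exp (-(r + γ ^ 2 / 2) * T - γ * w)) ^ (1 / (p₂ - 1)))
        ∂(gaussianReal 0 (Real.toNNReal T)))
      = lam ^ (1 / (p₂ - 1)) *
          xi γ r T 0 1 (p₂ / (p₂ - 1)) 0 (ENNReal.ofReal (V ^ (p₂ - 1) / lam))
        + V * xi γ r T 0 1 1 (ENNReal.ofReal (V ^ (p₂ - 1) / lam)) ⊤ := by
  set c := V ^ (p₂ - 1) / lam
  have hc : 0 < c := by positivity
  have hsplit :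
      (fun w ↦ pricingKernel γ r T w * max V ((lam * pricingKernel γ r T w) ^ (1 / (p₂ - 1))))
        = {w | pricingKernel γ r T w ≤ c}.piecewise
          (fun w ↦ lam ^ (1 / (p₂ - 1)) * pricingKernel γ r T w ^ (p₂ / (p₂ - 1)))
          (fun w ↦ V * pricingKernel γ r T w ^ (1 : ℝ)) := by
    ext w
    rw [mul_max_rpow_eq_ite hlam hV hp (pricingKernel_pos w)]
    simp only [piecewise, rpow_one]
    rfl
  change ∫ w, pricingKernel γ r T w * max V ((lam * pricingKernel γ r T w) ^ (1 / (p₂ - 1)))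
    ∂gaussianReal 0 T.toNNReal = _
  rw [hsplit,
    integral_piecewise (measurableSet_le continuous_pricingKernel.measurable measurable_const)
      ((integrable_pricingKernel_rpow _ _ _).const_mul _).integrableOn
      ((integrable_pricingKernel_rpow _ _ _).const_mul _).integrableOn,
    compl_ofPred]
  simp only [not_le]
  rw [integral_const_mul, integral_const_mul, setIntegral_pricingKernel_rpow_le hT hγ hc,
    setIntegral_pricingKernel_rpow_gt hT hγ hc]

theorem budget_identity_optimal_constrained_terminal_wealth
    (T γ r p₂ lam V : ℝ)
    (hT : 0 < T) (hγ : 0 < γ) (hr : 0 < r) (hp : p₂ < 1) (hp0 : p₂ ≠ 0)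
    (hlam : 0 < lam) (hV : 0 < V) :
    (∫ w, Real.exp (-(r + γ ^ 2 / 2) * T - γ * w) *
        max V ((lam * Real.exp (-(r + γ ^ 2 / 2) * T - γ * w)) ^ (1 / (p₂ - 1)))
        ∂(gaussianReal 0 (Real.toNNReal T)))
      = lam ^ (1 / (p₂ - 1)) *
          xi γ r T 0 1 (p₂ / (p₂ - 1)) 0 (ENNReal.ofReal (V ^ (p₂ - 1) / lam))
        + V * xi γ r T 0 1 1 (ENNReal.ofReal (V ^ (p₂ - 1) / lam)) ⊤ :=
  budget_identity_optimal_constrained_terminal_wealth_general T γ r p₂ lam V hT hγ hp hlam hV
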